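/- arXiv:2409.17510 — 2 statements merged into one kernel-verified Lean document; each statement's English description precedes it below -/
import Mathlib

section
/- Let S be a real N×N matrix with nonnegative entries and strictly positive diagonal (S i i > 0 for every i), let F : Fin N → Fin N → Prop be any relation, and define the h-hop detour relation D^h i j := ((S^h) i j > 0) ∧ F i j. Fix indices i, j and natural numbers 1 ≤ h ≤ H with D^h i j. Then the cardinality of the finite set of those h' with h ≤ h' ≤ H, h' ≡ h (mod 2), and D^{h'} i j equals (H − h)/2 + 1 (natural number division). -/
theorem stmt_5 (N : ℕ) (hN : 0 < N) (S : Matrix (Fin N) (Fin N) ℝ)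
    (hnonneg : ∀ i j, 0 ≤ S i j)
    (hdiag : ∀ i, 0 < S i i)
    (F : Fin N → Fin N → Prop)
    (D : ℕ → Fin N → Fin N → Prop)
    (hD : ∀ h i j, D h i j ↔ (0 < (S ^ h) i j ∧ F i j))
    (i j : Fin N) (h H : ℕ) (h1 : 1 ≤ h) (hH : h ≤ H) (hDh : D h i j) :
    {h' : ℕ | h ≤ h' ∧ h' ≤ H ∧ h' % 2 = h % 2 ∧ D h' i j}.ncard = (H - h) / 2 + 1 := by
  have hpownn : ∀ (n : ℕ) (a b : Fin N), 0 ≤ (S ^ n) a b := by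
    intro n
    induction n with
    | zero =>
      intro a b
      simp [Matrix.one_apply]
      split <;> norm_num
    | succ n ih =>
      intro a b
      rw [pow_succ, Matrix.mul_apply]
      exact Finset.sum_nonneg fun k _ => mul_nonneg (ih a k) (hnonneg k b)
  have hF : F i j := ((hD h i j).mp hDh).2
  have hpos : ∀ m, h ≤ m → 0 < (S ^ m) i j := by
    intro m hm
    induction m with
    | zero =>
      have : h = 0 := Nat.le_zero.mp hm
      exact this ▸ ((hD h i j).mp hDh).1
    | succ n ih =>
      rcases Nat.lt_or_ge h (n + 1) with hlt | hge
      · have hn : h ≤ n := Nat.lt_succ_iff.mp hlt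
        have hp : 0 < (S ^ n) i j := ih hn
        rw [pow_succ, Matrix.mul_apply]
        have : 0 < (S ^ n) i j * S j j := mul_pos hp (hdiag j)
        refine Finset.sum_pos' (fun k _ => mul_nonneg (hpownn n i k) (hnonneg k j)) ⟨j, Finset.mem_univ j, this⟩
      · have : h = n + 1 := le_antisymm hm hge
        exact this ▸ ((hD h i j).mp hDh).1
  have hset : {h' : ℕ | h ≤ h' ∧ h' ≤ H ∧ h' % 2 = h % 2 ∧ D h' i j}
      = ↑((Finset.range ((H - h) / 2 + 1)).image (fun k => h + 2 * k)) := by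
    ext h'
    simp only [Set.mem_setOf_eq, Finset.coe_image, Set.mem_image, Finset.mem_coe,
      Finset.mem_range]
    constructor
    · rintro ⟨hle, hle2, hpar, _⟩
      exact ⟨(h' - h) / 2, by omega, by omega⟩
    · rintro ⟨k, hk, rfl⟩
      refine ⟨by omega, by omega, by omega, ?_⟩
      exact (hD _ i j).mpr ⟨hpos _ (by omega), hF⟩
  rw [hset, Set.ncard_coe_finset,
    Finset.card_image_of_injective _ (fun a b hab => by omega), Finset.card_range]
end

section
/- Let N, C be positive natural numbers, let α, β, γ : Matrix (Fin C) (Fin C) ℝ, and let T : Fin N → Finset (Fin N) with T i nonempty for every i. For X : Matrix (Fin N) (Fin C) ℝ define the masked attention weights S X i j = exp(((X*α)*(X*β)ᵀ) i j) / (Σ_{k ∈ T i} exp(((X*α)*(X*β)ᵀ) i k)) if j ∈ T i and S X i j = 0 otherwise, and define the head output head X i c = Σ_j (S X i j) * ((X*γ) j c). Fix an index i. If X, X' : Matrix (Fin N) (Fin C) ℝ satisfy X i c = X' i c for all c and X j c = X' j c for all j ∈ T i and all c, then head X i c = head X' i c for all c. -/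
open Matrix

theorem stmt_12 (N C : ℕ) (hN : 0 < N) (hC : 0 < C)
    (α β γ : Matrix (Fin C) (Fin C) ℝ)
    (T : Fin N → Finset (Fin N)) (hT : ∀ i, (T i).Nonempty)
    (S : Matrix (Fin N) (Fin C) ℝ → Fin N → Fin N → ℝ)
    (hS : ∀ (X : Matrix (Fin N) (Fin C) ℝ) (i j : Fin N),
      S X i j =
        if j ∈ T i then
          Real.exp (((X * α) * (X * β)ᵀ) i j) /
            (∑ k ∈ T i, Real.exp (((X * α) * (X * β)ᵀ) i k))
        else 0)
    (head : Matrix (Fin N) (Fin C) ℝ → Fin N → Fin C → ℝ)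
    (hhead : ∀ (X : Matrix (Fin N) (Fin C) ℝ) (i : Fin N) (c : Fin C),
      head X i c = ∑ j, S X i j * (X * γ) j c)
    (i : Fin N) (X X' : Matrix (Fin N) (Fin C) ℝ)
    (hXi : ∀ c, X i c = X' i c)
    (hXT : ∀ j ∈ T i, ∀ c, X j c = X' j c) :
    ∀ c, head X i c = head X' i c := by
  have hrow : ∀ j ∈ T i, ∀ (M : Matrix (Fin C) (Fin C) ℝ) c, (X * M) j c = (X' * M) j c := by
    intro j hj M c
    simp only [Matrix.mul_apply]
    exact Finset.sum_congr rfl (fun k _ => by rw [hXT j hj k])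
  have hrowi : ∀ (M : Matrix (Fin C) (Fin C) ℝ) c, (X * M) i c = (X' * M) i c := by
    intro M c
    simp only [Matrix.mul_apply]
    exact Finset.sum_congr rfl (fun k _ => by rw [hXi k])
  have hE : ∀ j ∈ T i, ((X * α) * (X * β)ᵀ) i j = ((X' * α) * (X' * β)ᵀ) i j := by
    intro j hj
    rw [Matrix.mul_apply, Matrix.mul_apply]
    refine Finset.sum_congr rfl (fun k _ => ?_)
    rw [Matrix.transpose_apply, Matrix.transpose_apply, hrowi α k, hrow j hj β k]
  intro c
  rw [hhead, hhead]
  refine Finset.sum_congr rfl (fun j _ => ?_)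
  rw [hS, hS]
  by_cases hj : j ∈ T i
  · have hsum : (∑ k ∈ T i, Real.exp (((X * α) * (X * β)ᵀ) i k)) =
        ∑ k ∈ T i, Real.exp (((X' * α) * (X' * β)ᵀ) i k) :=
      Finset.sum_congr rfl (fun k hk => by rw [hE k hk])
    simp only [hj, if_true]
    rw [hE j hj, hrow j hj γ c, hsum]
  · simp [hj]
end
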